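/- arXiv:2605.06693 — 6 statements merged into one kernel-verified Lean document; each statement's English description precedes it below -/
import Mathlib

section
/- Let H be a complex Hilbert space, let A be a bounded self-adjoint operator on H with ⟨x, A x⟩ ≥ ℓ‖x‖² for all x ∈ H for some ℓ > 0, let m ≥ 1 and let s > m/2 be real. Let η : ℝ^m → ℂ be a continuous compactly supported function with ∫_{ℝ^m} η = 1, and let 𝓕η denote its Fourier transform. Then for all J, K ∈ H, the limit as ε → 0⁺ of ∫_{ℝ^m} |𝓕η(ε q)|² · (2π)^{-m} · ⟨J, cfc(fun x : ℝ => (x + ‖q‖²)^{-s}) A K⟩ dq exists and equals (4π)^{-m/2} · (Γ(s − m/2)/Γ(s)) · ⟨J, cfc(fun x => x^{m/2 − s}) A K⟩. -/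
/-!
Gamma subordination, `Γ(s) a^(-s) = ∫₀^∞ t^(s-1) e^(-a t) dt`, turns `(x + ‖q‖²)^(-s)` into a
superposition of Gaussians in `q`; integrating those first gives
`∫ (x + ‖q‖²)^(-s) dq = π^(m/2) Γ(s - m/2) / Γ(s) · x^(m/2 - s)` for `x > 0` and `s > m/2`.
Coercivity puts the spectrum of `A` in `[ℓ, ∞)`, where all these functions are dominated by the
integrable `(ℓ + ‖q‖²)^(-s)`, so the `q`-integral commutes with the functional calculus. Finally
`‖𝓕 η‖²` is continuous, bounded by `(∫ ‖η‖)²` and equal to `‖∫ η‖² = 1` at the origin, so dominated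
convergence removes the cutoff `‖𝓕 η (ε q)‖²` as `ε → 0`.
-/

open MeasureTheory Real Filter Set
open scoped InnerProductSpace FourierTransform Topology

theorem ContinuousLinearMap.spectrum_subset_Ici_of_coercive {H : Type*} [NormedAddCommGroup H]
    [InnerProductSpace ℂ H] [CompleteSpace H] {A : H →L[ℂ] H} (hA : IsSelfAdjoint A) {ℓ : ℝ}
    (hbound : ∀ x : H, ℓ * ‖x‖ ^ 2 ≤ (⟪x, A x⟫_ℂ).re) :
    spectrum ℝ A ⊆ Ici ℓ := by
  have hle : algebraMap ℝ (H →L[ℂ] H) ℓ ≤ A := by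
    rw [le_def, isPositive_def']
    refine ⟨hA.sub (.algebraMap _ (.all ℓ)), fun x => ?_⟩
    have hℓx : (⟪ℓ • x, x⟫_ℂ).re = ℓ * ‖x‖ ^ 2 := by
      simp [inner_smul_left_eq_smul, ← Complex.ofReal_pow]
    have hsymm : (⟪A x, x⟫_ℂ).re = (⟪x, A x⟫_ℂ).re := inner_re_symm (𝕜 := ℂ) _ _
    simpa [reApplyInnerSelf, inner_sub_left, Algebra.algebraMap_eq_smul_one, hℓx, hsymm]
      using hbound x
  exact fun x hx => (algebraMap_le_iff_le_spectrum hA).1 hle x hx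

theorem norm_add_sq_rpow_neg_le {ℓ x r s : ℝ} (hℓ : 0 < ℓ) (hx : ℓ ≤ x) (hs : 0 ≤ s) :
    ‖(x + r ^ 2) ^ (-s)‖ ≤ (ℓ + r ^ 2) ^ (-s) := by
  rw [norm_of_nonneg (rpow_nonneg (add_nonneg (by linarith) (sq_nonneg r)) _)]
  exact rpow_le_rpow_of_nonpos (by positivity) (by linarith) (by linarith)

theorem continuousOn_add_norm_sq_rpow_neg {E : Type*} [SeminormedAddCommGroup E] {S : Set ℝ}
    (hS : S ⊆ Ioi 0) (s : ℝ) :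
    ContinuousOn (Function.uncurry fun (q : E) (x : ℝ) => (x + ‖q‖ ^ 2) ^ (-s)) (univ ×ˢ S) :=
  (continuousOn_snd.add (continuous_fst.norm.pow 2).continuousOn).rpow_const
    fun _ hp => .inl (add_pos_of_pos_of_nonneg (hS hp.2) (sq_nonneg _)).ne'

section AddNormSqRpow

variable {V : Type*} [NormedAddCommGroup V] [InnerProductSpace ℝ V] [FiniteDimensional ℝ V]
  [MeasurableSpace V] [BorelSpace V]

theorem integrable_add_norm_sq_rpow_neg (μ : Measure V) [μ.IsAddHaarMeasure] {x s : ℝ}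
    (hx : 0 < x) (hs : (Module.finrank ℝ V : ℝ) / 2 < s) :
    Integrable (fun q : V => (x + ‖q‖ ^ 2) ^ (-s)) μ := by
  have hbracket := (integrable_rpow_neg_one_add_norm_sq (μ := μ)
    (show (Module.finrank ℝ V : ℝ) < 2 * s by linarith)).const_mul (min x 1 ^ (-s))
  have hcont : Continuous fun q : V => (x + ‖q‖ ^ 2) ^ (-s) :=
    (continuous_const.add (continuous_norm.pow 2)).rpow_const
      fun q => .inl (add_pos_of_pos_of_nonneg hx (sq_nonneg ‖q‖)).ne'
  refine hbracket.mono' hcont.aestronglyMeasurable (.of_forall fun q => ?_)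
  have hmin : 0 < min x 1 := lt_min hx one_pos
  have hle : min x 1 * (1 + ‖q‖ ^ 2) ≤ x + ‖q‖ ^ 2 := by
    nlinarith [min_le_left x 1, min_le_right x 1, sq_nonneg ‖q‖]
  rw [norm_of_nonneg (by positivity), neg_div, mul_div_cancel_left₀ _ two_ne_zero,
    ← mul_rpow hmin.le (by positivity)]
  exact rpow_le_rpow_of_nonpos (by positivity) hle
    (by linarith [(Module.finrank ℝ V).cast_nonneg (α := ℝ)])

theorem integral_add_norm_sq_rpow_neg {x s : ℝ} (hx : 0 < x)
    (hs : (Module.finrank ℝ V : ℝ) / 2 < s) :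
    ∫ q : V, (x + ‖q‖ ^ 2) ^ (-s) = π ^ ((Module.finrank ℝ V : ℝ) / 2) *
      (Gamma (s - Module.finrank ℝ V / 2) / Gamma s) * x ^ ((Module.finrank ℝ V : ℝ) / 2 - s) := by
  set d : ℝ := (Module.finrank ℝ V : ℝ) with hd
  have hs0 : 0 < s := by linarith [(Module.finrank ℝ V).cast_nonneg (α := ℝ)]
  have hGamma {p a : ℝ} (hp : 0 < p) (ha : 0 < a) :
      ∫ t in Ioi 0, t ^ (p - 1) * exp (-(a * t)) = a ^ (-p) * Gamma p := by
    rw [integral_rpow_mul_exp_neg_mul_Ioi hp ha, one_div, inv_rpow ha.le, rpow_neg ha.le]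
  set kernel : V → ℝ → ℝ := fun q t => t ^ (s - 1) * exp (-((x + ‖q‖ ^ 2) * t))
  have hpos (q : V) : 0 < x + ‖q‖ ^ 2 := by positivity
  have hkernel_t (q : V) : ∫ t in Ioi 0, kernel q t = (x + ‖q‖ ^ 2) ^ (-s) * Gamma s :=
    hGamma hs0 (hpos q)
  have hkernel_q {t : ℝ} (ht : 0 < t) :
      ∫ q, kernel q t = π ^ (d / 2) * (t ^ (s - d / 2 - 1) * exp (-(x * t))) := by
    have hsplit (q : V) : kernel q t = t ^ (s - 1) * exp (-(x * t)) * exp (-t * ‖q‖ ^ 2) := by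
      simp only [kernel, mul_assoc, ← exp_add]; ring_nf
    simp_rw [hsplit, integral_const_mul, GaussianFourier.integral_rexp_neg_mul_sq_norm ht, ← hd,
      div_rpow pi_pos.le ht.le, sub_sub, rpow_sub ht, rpow_add ht, rpow_one]
    field_simp
  have hint : Integrable (Function.uncurry kernel) (volume.prod (volume.restrict (Ioi 0))) := by
    have hmeas : AEStronglyMeasurable (Function.uncurry kernel)
        (volume.prod (volume.restrict (Ioi 0))) :=
      (by fun_prop : Measurable fun p : V × ℝ =>
        p.2 ^ (s - 1) * exp (-((x + ‖p.1‖ ^ 2) * p.2))).aestronglyMeasurable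
    refine (integrable_prod_iff hmeas).2 ⟨.of_forall fun q => ?_, ?_⟩
    · refine .of_integral_ne_zero ?_
      simp only [Function.uncurry_apply_pair, hkernel_t q]
      have := hpos q
      positivity
    · refine ((integrable_add_norm_sq_rpow_neg volume hx hs).mul_const (Gamma s)).congr
        (.of_forall fun q => ?_)
      simp only [← hkernel_t q, Function.uncurry_apply_pair]
      refine setIntegral_congr_fun measurableSet_Ioi fun t (ht : 0 < t) => ?_
      exact (norm_of_nonneg (by positivity)).symm
  calc ∫ q : V, (x + ‖q‖ ^ 2) ^ (-s)
      = (∫ q : V, ∫ t in Ioi 0, kernel q t) / Gamma s := by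
        simp_rw [hkernel_t, integral_mul_const]
        field_simp [(Gamma_pos_of_pos hs0).ne']
    _ = (∫ t in Ioi 0, ∫ q : V, kernel q t) / Gamma s := by rw [integral_integral_swap hint]
    _ = π ^ (d / 2) * (x ^ (-(s - d / 2)) * Gamma (s - d / 2)) / Gamma s := by
        rw [setIntegral_congr_fun measurableSet_Ioi fun t ht => hkernel_q ht, integral_const_mul,
          hGamma (by linarith) hx]
    _ = _ := by rw [neg_sub]; ring

variable {𝒜 : Type*} [NormedRing 𝒜] [StarRing 𝒜] [NormedAlgebra ℝ 𝒜] [CompleteSpace 𝒜]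
  [ContinuousFunctionalCalculus ℝ 𝒜 IsSelfAdjoint] {a : 𝒜} {ℓ s : ℝ}

theorem integrable_cfc_add_norm_sq_rpow_neg (ha : IsSelfAdjoint a) (hℓ : 0 < ℓ)
    (hσ : spectrum ℝ a ⊆ Ici ℓ) (hs : (Module.finrank ℝ V : ℝ) / 2 < s) :
    Integrable (fun q : V => cfc (fun x : ℝ => (x + ‖q‖ ^ 2) ^ (-s)) a) :=
  integrable_cfc _ (fun q : V => (ℓ + ‖q‖ ^ 2) ^ (-s)) a
    (continuousOn_add_norm_sq_rpow_neg (hσ.trans (Ici_subset_Ioi.2 hℓ)) s)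
    (.of_forall fun _ _ hz => norm_add_sq_rpow_neg_le hℓ (hσ hz)
      (by linarith [(Module.finrank ℝ V).cast_nonneg (α := ℝ)]))
    (integrable_add_norm_sq_rpow_neg volume hℓ hs).hasFiniteIntegral

theorem integral_cfc_add_norm_sq_rpow_neg (ha : IsSelfAdjoint a) (hℓ : 0 < ℓ)
    (hσ : spectrum ℝ a ⊆ Ici ℓ) (hs : (Module.finrank ℝ V : ℝ) / 2 < s) :
    ∫ q : V, cfc (fun x : ℝ => (x + ‖q‖ ^ 2) ^ (-s)) a =
      (π ^ ((Module.finrank ℝ V : ℝ) / 2) * (Gamma (s - Module.finrank ℝ V / 2) / Gamma s)) •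
        cfc (fun x : ℝ => x ^ ((Module.finrank ℝ V : ℝ) / 2 - s)) a := by
  have hpow : ContinuousOn (fun x : ℝ => x ^ ((Module.finrank ℝ V : ℝ) / 2 - s))
      (spectrum ℝ a) :=
    continuousOn_id.rpow_const fun x hx => .inl (hℓ.trans_le (hσ hx)).ne'
  rw [← cfc_integral _ (fun q : V => (ℓ + ‖q‖ ^ 2) ^ (-s)) a
    (continuousOn_add_norm_sq_rpow_neg (hσ.trans (Ici_subset_Ioi.2 hℓ)) s)
    (.of_forall fun _ _ hz => norm_add_sq_rpow_neg_le hℓ (hσ hz)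
      (by linarith [(Module.finrank ℝ V).cast_nonneg (α := ℝ)]))
    (integrable_add_norm_sq_rpow_neg volume hℓ hs).hasFiniteIntegral,
    ← cfc_const_mul _ _ _ hpow]
  exact cfc_congr fun x hx => integral_add_norm_sq_rpow_neg (hℓ.trans_le (hσ hx)) hs

end AddNormSqRpow

theorem tendsto_integral_smul_comp_smul {E F : Type*} [NormedAddCommGroup E] [NormedSpace ℝ E]
    [MeasurableSpace E] [OpensMeasurableSpace E] [NormedAddCommGroup F] [NormedSpace ℝ F]
    {μ : Measure E} {φ : E → ℝ} (hφ : Continuous φ) {C : ℝ} (hφC : ∀ w, ‖φ w‖ ≤ C)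
    {g : E → F} (hg : Integrable g μ) :
    Tendsto (fun ε : ℝ => ∫ q, φ (ε • q) • g q ∂μ) (𝓝 0) (𝓝 (φ 0 • ∫ q, g q ∂μ)) := by
  rw [← integral_smul]
  refine tendsto_integral_filter_of_dominated_convergence (fun q => C * ‖g q‖)
    (.of_forall fun ε => (hφ.comp (continuous_const_smul ε)).aestronglyMeasurable.smul hg.1)
    (.of_forall fun ε => .of_forall fun q => ?_) (hg.norm.const_mul C) (.of_forall fun q => ?_)
  · rw [norm_smul]
    exact mul_le_mul_of_nonneg_right (hφC _) (norm_nonneg _)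
  · have hεq : Tendsto (fun ε : ℝ => ε • q) (𝓝 0) (𝓝 0) := by
      simpa using (tendsto_id (x := 𝓝 (0 : ℝ))).smul_const q
    exact ((hφ.tendsto 0).comp hεq).smul_const _

theorem four_mul_pi_rpow_neg_div_two (m : ℝ) :
    (4 * π) ^ (-m / 2) = (2 * π) ^ (-m) * π ^ (m / 2) := by
  rw [show 4 * π = (2 * π) ^ (2 : ℝ) * π⁻¹ by field_simp; norm_num; ring,
    mul_rpow (by positivity) (inv_nonneg.2 pi_pos.le), ← rpow_mul (by positivity),
    inv_rpow pi_pos.le, ← rpow_neg pi_pos.le]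
  ring_nf

theorem stmt_5_general {H : Type*} [NormedAddCommGroup H] [InnerProductSpace ℂ H] [CompleteSpace H]
    (A : H →L[ℂ] H) (hA : IsSelfAdjoint A) (ℓ : ℝ) (hℓ : 0 < ℓ)
    (hbound : ∀ x : H, ℓ * ‖x‖ ^ 2 ≤ (⟪x, A x⟫_ℂ).re)
    (m : ℕ) (s : ℝ) (hs : s > m / 2)
    (η : EuclideanSpace ℝ (Fin m) → ℂ) (hηc : Continuous η) (hηs : HasCompactSupport η)
    (hηint : ∫ y : EuclideanSpace ℝ (Fin m), η y = 1) (J K : H) :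
    Tendsto (fun ε : ℝ =>
        ∫ q : EuclideanSpace ℝ (Fin m),
          ((‖𝓕 η (ε • q)‖ ^ 2 * (2 * π) ^ (-(m : ℝ)) : ℝ) : ℂ) *
            ⟪J, cfc (fun x : ℝ => (x + ‖q‖ ^ 2) ^ (-s)) A K⟫_ℂ)
      (𝓝[>] 0)
      (𝓝 ((((4 * π) ^ (-(m : ℝ) / 2) * (Real.Gamma (s - m / 2) / Real.Gamma s) : ℝ) : ℂ) *
          ⟪J, cfc (fun x : ℝ => x ^ ((m : ℝ) / 2 - s)) A K⟫_ℂ)) := by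
  have hs' : (Module.finrank ℝ (EuclideanSpace ℝ (Fin m)) : ℝ) / 2 < s := by
    rwa [finrank_euclideanSpace_fin]
  have hσ := A.spectrum_subset_Ici_of_coercive hA hbound
  have hηi : Integrable η := hηc.integrable_of_hasCompactSupport hηs
  have hφ : Continuous fun w => ‖𝓕 η w‖ ^ 2 :=
    (VectorFourier.fourierIntegral_continuous continuous_fourierChar continuous_inner
      hηi).norm.pow 2
  have hφC (w : EuclideanSpace ℝ (Fin m)) : ‖‖𝓕 η w‖ ^ 2‖ ≤ (∫ v, ‖η v‖) ^ 2 := by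
    rw [norm_pow, norm_norm]
    exact pow_le_pow_left₀ (norm_nonneg _)
      (VectorFourier.norm_fourierIntegral_le_integral_norm _ _ _ _ _) 2
  have hφ0 : ‖𝓕 η 0‖ ^ 2 = 1 := by simp [fourier_eq, hηint]
  let L : (H →L[ℂ] H) →L[ℂ] ℂ := (innerSL ℂ J).comp (ContinuousLinearMap.apply ℂ H K)
  have hcfc := integrable_cfc_add_norm_sq_rpow_neg hA hℓ hσ hs'
  have key := tendsto_integral_smul_comp_smul hφ hφC
    ((L.integrable_comp hcfc).smul ((2 * π) ^ (-(m : ℝ))))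
  convert key.mono_left nhdsWithin_le_nhds using 2
  · refine integral_congr_ae (.of_forall fun q => ?_)
    simp [L, Complex.real_smul, mul_assoc]
  · simp only [hφ0, one_smul, Pi.smul_apply]
    rw [integral_smul, L.integral_comp_comm hcfc, integral_cfc_add_norm_sq_rpow_neg hA hℓ hσ hs',
      finrank_euclideanSpace_fin, four_mul_pi_rpow_neg_div_two]
    simp only [L, smul_apply, ContinuousLinearMap.comp_apply, ContinuousLinearMap.apply_apply,
      innerSL_apply_apply, inner_smul_right_eq_smul, Complex.real_smul]
    push_cast
    ring

theorem stmt_5 {H : Type*} [NormedAddCommGroup H] [InnerProductSpace ℂ H] [CompleteSpace H]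
    (A : H →L[ℂ] H) (hA : IsSelfAdjoint A) (ℓ : ℝ) (hℓ : 0 < ℓ)
    (hbound : ∀ x : H, ℓ * ‖x‖ ^ 2 ≤ (⟪x, A x⟫_ℂ).re)
    (m : ℕ) (hm : 1 ≤ m) (s : ℝ) (hs : s > m / 2)
    (η : EuclideanSpace ℝ (Fin m) → ℂ) (hηc : Continuous η) (hηs : HasCompactSupport η)
    (hηint : ∫ y : EuclideanSpace ℝ (Fin m), η y = 1) (J K : H) :
    Tendsto (fun ε : ℝ =>
        ∫ q : EuclideanSpace ℝ (Fin m),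
          ((‖𝓕 η (ε • q)‖ ^ 2 * (2 * π) ^ (-(m : ℝ)) : ℝ) : ℂ) *
            ⟪J, cfc (fun x : ℝ => (x + ‖q‖ ^ 2) ^ (-s)) A K⟫_ℂ)
      (𝓝[>] 0)
      (𝓝 ((((4 * π) ^ (-(m : ℝ) / 2) * (Real.Gamma (s - m / 2) / Real.Gamma s) : ℝ) : ℂ) *
          ⟪J, cfc (fun x : ℝ => x ^ ((m : ℝ) / 2 - s)) A K⟫_ℂ)) :=
  stmt_5_general A hA ℓ hℓ hbound m s hs η hηc hηs hηint J K
end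

section
/- Let ℓ > 0. Define Θ_N(ℓ; t) = ∑_{m=0}^∞ exp(−π² m² t/ℓ²) and Θ_D(ℓ; t) = ∑_{r=1}^∞ exp(−π² r² t/ℓ²) for t > 0. Then, as t → 0⁺, Θ_N(ℓ; t) − ℓ/(2√(π t)) tends to 1/2, and Θ_D(ℓ; t) − ℓ/(2√(π t)) tends to −1/2. -/
open Real Filter Topology

/-- One-dimensional Neumann heat sum for an interval of length `ℓ`. -/
noncomputable def ThetaN (ℓ t : ℝ) : ℝ :=
  ∑' m : ℕ, Real.exp (-(π ^ 2) * (m : ℝ) ^ 2 * t / ℓ ^ 2)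

/-- One-dimensional Dirichlet heat sum for an interval of length `ℓ`. -/
noncomputable def ThetaD (ℓ t : ℝ) : ℝ :=
  ∑' r : ℕ, Real.exp (-(π ^ 2) * ((r : ℝ) + 1) ^ 2 * t / ℓ ^ 2)

lemma sum_nat_gauss {c : ℝ} (hc : 0 < c) :
    Summable fun n : ℕ => Real.exp (-c * (n : ℝ) ^ 2) := by
  apply Summable.of_nonneg_of_le (fun n => (Real.exp_pos _).le) (f := fun n => Real.exp (-c) ^ n)
  · intro n
    rw [← Real.exp_nat_mul, Real.exp_le_exp]
    have h : (n : ℝ) ≤ (n : ℝ) ^ 2 := by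
      have := Nat.le_self_pow (two_ne_zero) n
      exact_mod_cast this
    nlinarith
  · exact summable_geometric_of_lt_one (Real.exp_pos _).le
      (Real.exp_lt_one_iff.mpr (by linarith))

lemma sum_nat_gauss' {c : ℝ} (hc : 0 < c) :
    Summable fun n : ℕ => Real.exp (-c * ((n : ℝ) + 1) ^ 2) := by
  have h := (summable_nat_add_iff 1).mpr (sum_nat_gauss hc)
  exact h.congr fun n => by norm_cast

lemma int_gauss_eq {c : ℝ} (hc : 0 < c) :
    (∑' n : ℤ, Real.exp (-c * (n : ℝ) ^ 2)) =
      1 + 2 * ∑' n : ℕ, Real.exp (-c * ((n : ℝ) + 1) ^ 2) := by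
  have h1 : Summable fun n : ℕ => Real.exp (-c * (((n : ℤ) : ℝ)) ^ 2) := by
    have := sum_nat_gauss hc
    push_cast
    exact this
  have h2 : Summable fun n : ℕ => Real.exp (-c * (((-(n + 1) : ℤ) : ℝ)) ^ 2) := by
    refine (sum_nat_gauss' hc).congr fun n => ?_
    rw [show (((-(n + 1) : ℤ)) : ℝ) = -((n : ℝ) + 1) by push_cast; ring, neg_sq]
  rw [tsum_of_nat_of_neg_add_one (f := fun n : ℤ => Real.exp (-c * (n : ℝ) ^ 2)) h1 h2]
  have e1 : (∑' n : ℕ, Real.exp (-c * (((n : ℤ) : ℝ)) ^ 2)) =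
      1 + ∑' n : ℕ, Real.exp (-c * ((n : ℝ) + 1) ^ 2) := by
    rw [Summable.tsum_eq_zero_add h1]
    congr 1
    · norm_num
    · exact tsum_congr fun n => by norm_cast
  have e2 : (∑' n : ℕ, Real.exp (-c * (((-(n + 1) : ℤ) : ℝ)) ^ 2)) =
      ∑' n : ℕ, Real.exp (-c * ((n : ℝ) + 1) ^ 2) :=
    tsum_congr fun n => by
      rw [show (((-(n + 1) : ℤ)) : ℝ) = -((n : ℝ) + 1) by push_cast; ring, neg_sq]
  rw [e1, e2]; ring

theorem stmt_11 (ℓ : ℝ) (hℓ : 0 < ℓ) :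
    Tendsto (fun t : ℝ => ThetaN ℓ t - ℓ / (2 * Real.sqrt (π * t))) (𝓝[>] 0)
      (𝓝 (1 / 2)) ∧
    Tendsto (fun t : ℝ => ThetaD ℓ t - ℓ / (2 * Real.sqrt (π * t))) (𝓝[>] 0)
      (𝓝 (-(1 / 2))) := by
  set E : ℝ → ℝ := fun b => (Real.sqrt b)⁻¹ *
    ∑' n : ℕ, Real.exp (-(π / b) * ((n : ℝ) + 1) ^ 2) with hEdef
  -- E tends to 0 along 𝓝[>] 0
  have hE : Tendsto E (𝓝[>] (0 : ℝ)) (𝓝 0) := by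
    have hexp1 : Real.exp (-1) < 1 := Real.exp_lt_one_iff.mpr (by norm_num)
    have C0 : (0:ℝ) < (1 - Real.exp (-1))⁻¹ := inv_pos.mpr (by linarith)
    have hupper : Tendsto (fun b : ℝ => (1 - Real.exp (-1))⁻¹ *
        ((Real.sqrt b)⁻¹ * Real.exp (-(π / b)))) (𝓝[>] (0:ℝ)) (𝓝 0) := by
      have h1 : Tendsto (fun u : ℝ => u ^ ((1:ℝ)/2) * Real.exp (-π * u)) atTop (𝓝 0) :=
        tendsto_rpow_mul_exp_neg_mul_atTop_nhds_zero _ _ pi_pos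
      have h2 : Tendsto (fun b : ℝ => b⁻¹) (𝓝[>] (0:ℝ)) atTop := tendsto_inv_nhdsGT_zero
      have h3 := (h1.comp h2).const_mul ((1 - Real.exp (-1))⁻¹)
      rw [mul_zero] at h3
      apply h3.congr'
      filter_upwards [self_mem_nhdsWithin] with b hb
      simp only [Function.comp]
      rw [← Real.sqrt_eq_rpow, Real.sqrt_inv,
        show -π * b⁻¹ = -(π / b) by ring]
    apply tendsto_of_tendsto_of_tendsto_of_le_of_le' tendsto_const_nhds hupper
    · filter_upwards [self_mem_nhdsWithin] with b hb
      have hb0 : (0:ℝ) < b := hb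
      have hts : (0:ℝ) ≤ ∑' n : ℕ, Real.exp (-(π / b) * ((n : ℝ) + 1) ^ 2) :=
        tsum_nonneg (fun n => (Real.exp_pos _).le)
      have : (0:ℝ) ≤ (Real.sqrt b)⁻¹ := by positivity
      exact mul_nonneg this hts
    · filter_upwards [Ioo_mem_nhdsGT_of_mem (Set.mem_Ico.mpr ⟨le_refl 0, pi_pos⟩)]
        with b hb
      obtain ⟨hb0, hbπ⟩ := hb
      have hc1 : (1:ℝ) ≤ π / b := (one_le_div hb0).mpr hbπ.le
      have hc0 : (0:ℝ) < π / b := by linarith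
      have hbd : ∀ n : ℕ, Real.exp (-(π / b) * ((n : ℝ) + 1) ^ 2) ≤
          Real.exp (-(π / b)) * Real.exp (-1) ^ n := by
        intro n
        rw [← Real.exp_nat_mul, ← Real.exp_add, Real.exp_le_exp]
        have hn : (0:ℝ) ≤ (n : ℝ) := Nat.cast_nonneg n
        nlinarith [sq_nonneg ((n : ℝ) + 1), sq_nonneg (n : ℝ)]
      have hsum : ∑' n : ℕ, Real.exp (-(π / b) * ((n : ℝ) + 1) ^ 2) ≤
          Real.exp (-(π / b)) * (1 - Real.exp (-1))⁻¹ := by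
        have hg : Summable fun n : ℕ => Real.exp (-(π / b)) * Real.exp (-1) ^ n :=
          (summable_geometric_of_lt_one (Real.exp_pos _).le hexp1).mul_left _
        calc ∑' n : ℕ, Real.exp (-(π / b) * ((n : ℝ) + 1) ^ 2)
            ≤ ∑' n : ℕ, Real.exp (-(π / b)) * Real.exp (-1) ^ n :=
              Summable.tsum_le_tsum hbd (sum_nat_gauss' hc0) hg
          _ = Real.exp (-(π / b)) * (1 - Real.exp (-1))⁻¹ := by
              rw [tsum_mul_left, tsum_geometric_of_lt_one (Real.exp_pos _).le hexp1]
      have hs0 : (0:ℝ) < Real.sqrt b := Real.sqrt_pos.mpr hb0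
      calc E b ≤ (Real.sqrt b)⁻¹ * (Real.exp (-(π / b)) * (1 - Real.exp (-1))⁻¹) :=
            mul_le_mul_of_nonneg_left hsum (by positivity)
        _ = (1 - Real.exp (-1))⁻¹ * ((Real.sqrt b)⁻¹ * Real.exp (-(π / b))) := by ring
  -- b(t) = π t / ℓ² tends to 0⁺
  have hbt : Tendsto (fun t : ℝ => π * t / ℓ ^ 2) (𝓝[>] (0:ℝ)) (𝓝[>] (0:ℝ)) := by
    rw [tendsto_nhdsWithin_iff]
    constructor
    · have h : Tendsto (fun t : ℝ => π * t / ℓ ^ 2) (𝓝 (0:ℝ)) (𝓝 (π * 0 / ℓ ^ 2)) :=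
        (tendsto_id.const_mul π).div_const _
      simp only [mul_zero, zero_div] at h
      exact h.mono_left nhdsWithin_le_nhds
    · filter_upwards [self_mem_nhdsWithin] with t ht
      have ht0 : (0:ℝ) < t := ht
      have := pi_pos
      exact Set.mem_Ioi.mpr (by positivity)
  -- key identities for t > 0
  have key : ∀ t : ℝ, 0 < t →
      ThetaN ℓ t - ℓ / (2 * Real.sqrt (π * t)) = 1 / 2 + E (π * t / ℓ ^ 2) ∧
      ThetaD ℓ t - ℓ / (2 * Real.sqrt (π * t)) = -(1 / 2) + E (π * t / ℓ ^ 2) := by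
    intro t ht
    have hπ := pi_pos
    set b : ℝ := π * t / ℓ ^ 2 with hbdef
    have hb0 : 0 < b := by positivity
    have hπb : 0 < π * b := by positivity
    have hexpo : ∀ x : ℝ, -(π ^ 2) * x * t / ℓ ^ 2 = -(π * b) * x := by
      intro x
      rw [hbdef]; field_simp
    have hD : ThetaD ℓ t = ∑' n : ℕ, Real.exp (-(π * b) * ((n : ℝ) + 1) ^ 2) :=
      tsum_congr (fun n => by rw [hexpo])
    have hN : ThetaN ℓ t = ∑' n : ℕ, Real.exp (-(π * b) * (n : ℝ) ^ 2) :=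
      tsum_congr (fun n => by rw [hexpo])
    -- Poisson summation
    have hP := Real.tsum_exp_neg_mul_int_sq hb0
    have hZ1 : (∑' n : ℤ, Real.exp (-π * b * (n : ℝ) ^ 2)) =
        1 + 2 * ∑' n : ℕ, Real.exp (-(π * b) * ((n : ℝ) + 1) ^ 2) := by
      rw [← int_gauss_eq hπb]
      exact tsum_congr fun n => by congr 1; ring
    have hZ2 : (∑' n : ℤ, Real.exp (-π / b * (n : ℝ) ^ 2)) =
        1 + 2 * ∑' n : ℕ, Real.exp (-(π / b) * ((n : ℝ) + 1) ^ 2) := by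
      rw [← int_gauss_eq (show (0:ℝ) < π / b by positivity)]
      exact tsum_congr (fun n => by rw [neg_div])
    have hrpow : (1:ℝ) / b ^ ((1:ℝ)/2) = (Real.sqrt b)⁻¹ := by
      rw [← Real.sqrt_eq_rpow, one_div]
    rw [hZ1, hZ2, hrpow] at hP
    -- ThetaN = 1 + ThetaD
    have hND : ThetaN ℓ t = 1 + ThetaD ℓ t := by
      rw [hN, hD, Summable.tsum_eq_zero_add (sum_nat_gauss hπb)]
      congr 1
      · norm_num
      · exact tsum_congr fun n => by norm_cast
    -- ℓ / (2 √(π t)) = (√b)⁻¹ / 2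
    have hsq : ℓ / (2 * Real.sqrt (π * t)) = (Real.sqrt b)⁻¹ / 2 := by
      have h1 : Real.sqrt b = Real.sqrt (π * t) / ℓ := by
        rw [hbdef, Real.sqrt_div (by positivity), Real.sqrt_sq hℓ.le]
      have hπt0 : 0 < Real.sqrt (π * t) := Real.sqrt_pos.mpr (by positivity)
      rw [h1, inv_div]
      ring
    have hEb : E b = (Real.sqrt b)⁻¹ *
        ∑' n : ℕ, Real.exp (-(π / b) * ((n : ℝ) + 1) ^ 2) := rfl
    constructor
    · rw [hND, hD, hsq, hEb]
      linear_combination hP / 2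
    · rw [hD, hsq, hEb]
      linear_combination hP / 2
  constructor
  · have h := (hE.comp hbt).const_add ((1:ℝ)/2)
    rw [add_zero] at h
    apply h.congr'
    filter_upwards [self_mem_nhdsWithin] with t ht
    exact ((key t ht).1).symm
  · have h := (hE.comp hbt).const_add (-((1:ℝ)/2))
    rw [add_zero] at h
    apply h.congr'
    filter_upwards [self_mem_nhdsWithin] with t ht
    exact ((key t ht).2).symm
end

section
/- For α > 0, let D_α = [0,α] × [0,α⁻¹] × [0,1] ⊂ ℝ³ and define Δ(α) = ∫_{D_α} ∫_{D_α} ‖x − y‖^{-1} dx dy. For L > 0 and t > 0, define I_L(t) = ∫_0^L ∫_0^L exp(−t(x − y)²) dx dy. Then Δ(α) = π^{-1/2} · ∫_0^∞ t^{-1/2} · I_α(t) · I_{α⁻¹}(t) · I_1(t) dt. -/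
open MeasureTheory Real

/-- The plate-compatible unit-volume rectangular cell
`D_α = [0,α] × [0,α⁻¹] × [0,1]` in Euclidean `ℝ³`. -/
def cellD (α : ℝ) : Set (EuclideanSpace ℝ (Fin 3)) :=
  {x | x 0 ∈ Set.Icc 0 α ∧ x 1 ∈ Set.Icc 0 α⁻¹ ∧ x 2 ∈ Set.Icc 0 1}

/-- The flat Green energy `Δ(α)` of the cell `D_α`. -/
noncomputable def DeltaCell (α : ℝ) : ℝ :=
  ∫ x in cellD α, ∫ y in cellD α, ‖x - y‖⁻¹

/-- The one-dimensional Gaussian interval overlap `I_L(t)`. -/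
noncomputable def intervalOverlap (L t : ℝ) : ℝ :=
  ∫ x in Set.Icc (0 : ℝ) L, ∫ y in Set.Icc (0 : ℝ) L, Real.exp (-t * (x - y) ^ 2)

/-!
Subordination writes `‖x - y‖⁻¹ = π^{-1/2} ∫₀^∞ t^{-1/2} e^{-t‖x - y‖²} dt` (a `Γ(1/2)`
integral). Everything is nonnegative, so in `ℝ≥0∞` Tonelli moves the `t`-integral outside, and
the Green energy becomes a `t`-integral of the Gaussian self-overlap of the cell. The Gaussian
factorizes over coordinates, so on the box `D_α` that overlap is `I_α I_{α⁻¹} I_1`. Coming back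
from `ℝ≥0∞` to `ℝ` needs the inner integrals `∫_{D_α} ‖x - y‖⁻¹ dy` to be finite, which holds
because `‖·‖⁻¹` is locally integrable in dimension `3 > 1`.
-/

open Set Function
open scoped ENNReal

theorem inv_eq_rpow_mul_integral_rpow_mul_exp {r : ℝ} (hr : 0 < r) :
    r⁻¹ = π ^ (-(1 : ℝ) / 2) * ∫ t in Ioi (0 : ℝ), t ^ (-(1 : ℝ) / 2) * exp (-t * r ^ 2) := by
  have hΓ := integral_rpow_mul_exp_neg_mul_Ioi (a := 1 / 2) one_half_pos (pow_pos hr 2)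
  have hroot : (1 / r ^ 2) ^ (1 / 2 : ℝ) = r⁻¹ := by
    rw [← sqrt_eq_rpow, one_div, sqrt_inv, sqrt_sq hr.le]
  have hexp : ∀ t : ℝ, exp (-t * r ^ 2) = exp (-(r ^ 2 * t)) := fun t => by ring_nf
  simp_rw [hexp]
  rw [show -(1 : ℝ) / 2 = 1 / 2 - 1 by norm_num, hΓ, hroot, Gamma_one_half_eq, sqrt_eq_rpow,
    mul_left_comm, ← mul_assoc, mul_assoc, ← rpow_add pi_pos]
  norm_num

theorem ofReal_inv_eq_mul_lintegral {r : ℝ} (hr : 0 < r) :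
    ENNReal.ofReal r⁻¹ = ENNReal.ofReal (π ^ (-(1 : ℝ) / 2)) *
      ∫⁻ t in Ioi (0 : ℝ), ENNReal.ofReal (t ^ (-(1 : ℝ) / 2)) *
        ENNReal.ofReal (exp (-t * r ^ 2)) := by
  have hint : IntegrableOn (fun t : ℝ => t ^ (-(1 : ℝ) / 2) * exp (-t * r ^ 2)) (Ioi 0) := by
    refine (integrableOn_rpow_mul_exp_neg_mul_rpow (p := 1) (s := -(1 : ℝ) / 2) (by norm_num)
      one_pos (pow_pos hr 2)).congr_fun (fun t _ => ?_) measurableSet_Ioi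
    simp only [rpow_one]; ring_nf
  rw [inv_eq_rpow_mul_integral_rpow_mul_exp hr, ENNReal.ofReal_mul (by positivity),
    ofReal_integral_eq_lintegral_ofReal hint]
  · refine congrArg _ (setLIntegral_congr_fun measurableSet_Ioi fun t (ht : 0 < t) => ?_)
    exact ENNReal.ofReal_mul (by positivity)
  · filter_upwards [ae_restrict_mem measurableSet_Ioi] with t (ht : 0 < t)
    positivity

theorem lintegral_lintegral_lintegral_swap {X Y Z : Type*} [MeasurableSpace X] [MeasurableSpace Y]
    [MeasurableSpace Z] {μ : Measure X} {ν : Measure Y} {ρ : Measure Z} [SFinite μ] [SFinite ν]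
    [SFinite ρ] {f : X → Y → Z → ℝ≥0∞}
    (hf : Measurable fun q : (X × Y) × Z => f q.1.1 q.1.2 q.2) :
    ∫⁻ x, ∫⁻ y, ∫⁻ z, f x y z ∂ρ ∂ν ∂μ = ∫⁻ z, ∫⁻ x, ∫⁻ y, f x y z ∂ν ∂μ ∂ρ := by
  have hswap (x : X) : ∫⁻ y, ∫⁻ z, f x y z ∂ρ ∂ν = ∫⁻ z, ∫⁻ y, f x y z ∂ν ∂ρ :=
    lintegral_lintegral_swap
      (hf.comp (f := fun p : Y × Z => ((x, p.1), p.2)) (by fun_prop)).aemeasurable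
  simp_rw [hswap]
  exact lintegral_lintegral_swap
    ((hf.comp (f := fun q : (X × Z) × Y => ((q.1.1, q.2), q.1.2))
      (by fun_prop)).lintegral_prod_right' (ν := ν)).aemeasurable

section Subordination

variable {E : Type*} [NormedAddCommGroup E] [MeasurableSpace E] [BorelSpace E]
  [SecondCountableTopology E] {μ ν : Measure E} [SFinite μ] [SFinite ν] [NullSingletonClass ν]

theorem lintegral_lintegral_ofReal_inv_norm_sub :
    ∫⁻ x, ∫⁻ y, ENNReal.ofReal ‖x - y‖⁻¹ ∂ν ∂μ = ENNReal.ofReal (π ^ (-(1 : ℝ) / 2)) *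
      ∫⁻ t in Ioi (0 : ℝ), ENNReal.ofReal (t ^ (-(1 : ℝ) / 2)) *
        ∫⁻ x, ∫⁻ y, ENNReal.ofReal (exp (-t * ‖x - y‖ ^ 2)) ∂ν ∂μ := by
  have hsub (x : E) : (fun y => ENNReal.ofReal ‖x - y‖⁻¹) =ᵐ[ν] fun y =>
      ENNReal.ofReal (π ^ (-(1 : ℝ) / 2)) * ∫⁻ t in Ioi (0 : ℝ),
        ENNReal.ofReal (t ^ (-(1 : ℝ) / 2)) * ENNReal.ofReal (exp (-t * ‖x - y‖ ^ 2)) := by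
    filter_upwards [ν.ae_ne x] with y hy
    exact ofReal_inv_eq_mul_lintegral (norm_pos_iff.2 (sub_ne_zero.2 hy.symm))
  simp_rw [lintegral_congr_ae (hsub _), lintegral_const_mul' _ _ ENNReal.ofReal_ne_top]
  rw [lintegral_lintegral_lintegral_swap (by fun_prop)]
  simp_rw [lintegral_const_mul' _ _ ENNReal.ofReal_ne_top]

end Subordination

theorem isCompact_preimage_ofLp_pi {ι : Type*} {s : ι → Set ℝ} (hs : ∀ i, IsCompact (s i)) :
    IsCompact (WithLp.ofLp ⁻¹' univ.pi s : Set (EuclideanSpace ℝ ι)) :=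
  (EuclideanSpace.equiv ι ℝ).toHomeomorph.isCompact_preimage.2 (isCompact_univ_pi hs)

section Box

variable {ι : Type*} [Fintype ι]

theorem exp_neg_mul_norm_sub_sq (t : ℝ) (x y : EuclideanSpace ℝ ι) :
    exp (-t * ‖x - y‖ ^ 2) = ∏ i, exp (-t * (x i - y i) ^ 2) := by
  rw [← exp_sum, ← Finset.mul_sum, EuclideanSpace.norm_eq, sq_sqrt (by positivity)]
  simp [sq_abs]

theorem setIntegral_preimage_ofLp_pi_prod (s : ι → Set ℝ) (f : ι → ℝ → ℝ) :
    ∫ x in (WithLp.ofLp ⁻¹' univ.pi s : Set (EuclideanSpace ℝ ι)), ∏ i, f i (x i) =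
      ∏ i, ∫ a in s i, f i a := by
  refine ((EuclideanSpace.volume_preserving_symm_measurableEquiv_toLp ι).setIntegral_preimage_emb
    (MeasurableEquiv.measurableEmbedding _) (fun v => ∏ i, f i (v i)) _).trans ?_
  rw [volume_pi, Measure.restrict_pi_pi, integral_fintype_prod_eq_prod]

theorem integral_integral_exp_neg_mul_norm_sub_sq_pi (s : ι → Set ℝ) (t : ℝ) :
    ∫ x in (WithLp.ofLp ⁻¹' univ.pi s : Set (EuclideanSpace ℝ ι)),
      ∫ y in WithLp.ofLp ⁻¹' univ.pi s, exp (-t * ‖x - y‖ ^ 2) =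
      ∏ i, ∫ a in s i, ∫ b in s i, exp (-t * (a - b) ^ 2) := by
  have hinner (x : EuclideanSpace ℝ ι) :
      ∫ y in WithLp.ofLp ⁻¹' univ.pi s, ∏ i, exp (-t * (x i - y i) ^ 2) =
        ∏ i, ∫ b in s i, exp (-t * (x i - b) ^ 2) :=
    setIntegral_preimage_ofLp_pi_prod s fun i b => exp (-t * (x i - b) ^ 2)
  simp_rw [exp_neg_mul_norm_sub_sq, hinner]
  exact setIntegral_preimage_ofLp_pi_prod s fun i a => ∫ b in s i, exp (-t * (a - b) ^ 2)

end Box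

theorem ofReal_integral_integral {X Y : Type*} [MeasurableSpace X] [MeasurableSpace Y]
    {μ : Measure X} {ν : Measure Y} [SFinite μ] [SFinite ν] {f : X → Y → ℝ}
    (hf : Integrable (uncurry f) (μ.prod ν)) (h0 : ∀ x y, 0 ≤ f x y) :
    ENNReal.ofReal (∫ x, ∫ y, f x y ∂ν ∂μ) = ∫⁻ x, ∫⁻ y, ENNReal.ofReal (f x y) ∂ν ∂μ := by
  refine (congrArg ENNReal.ofReal (integral_prod _ hf)).symm.trans ?_
  rw [ofReal_integral_eq_lintegral_ofReal hf (ae_of_all _ fun z => h0 z.1 z.2),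
    lintegral_prod _ hf.aemeasurable.ennreal_ofReal]
  rfl

theorem integral_integral_eq_toReal_lintegral_lintegral {X Y : Type*} [MeasurableSpace X]
    [MeasurableSpace Y] {μ : Measure X} {ν : Measure Y} [SFinite ν] {f : X → Y → ℝ}
    (hf : Measurable (uncurry f)) (h0 : ∀ x y, 0 ≤ f x y) (hint : ∀ x, Integrable (f x) ν) :
    ∫ x, ∫ y, f x y ∂ν ∂μ = (∫⁻ x, ∫⁻ y, ENNReal.ofReal (f x y) ∂ν ∂μ).toReal := by
  rw [integral_eq_lintegral_of_nonneg_ae (ae_of_all _ fun x => integral_nonneg (h0 x))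
    hf.stronglyMeasurable.integral_prod_right'.aestronglyMeasurable]
  exact congrArg _ (lintegral_congr fun x =>
    ofReal_integral_eq_lintegral_ofReal (hint x) (ae_of_all _ (h0 x)))

theorem ofReal_integral_integral_exp_neg_mul_norm_sub_sq {E : Type*} [NormedAddCommGroup E]
    [MeasurableSpace E] [BorelSpace E] [SecondCountableTopology E] {μ ν : Measure E}
    [IsFiniteMeasure μ] [IsFiniteMeasure ν] {t : ℝ} (ht : 0 ≤ t) :
    ENNReal.ofReal (∫ x, ∫ y, exp (-t * ‖x - y‖ ^ 2) ∂ν ∂μ) =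
      ∫⁻ x, ∫⁻ y, ENNReal.ofReal (exp (-t * ‖x - y‖ ^ 2)) ∂ν ∂μ := by
  refine ofReal_integral_integral (Integrable.of_bound (by fun_prop) 1 (ae_of_all _ fun z => ?_))
    fun x y => (exp_pos _).le
  obtain ⟨x, y⟩ := z
  rw [uncurry_apply_pair, norm_of_nonneg (exp_pos _).le, exp_le_one_iff, neg_mul, neg_nonpos]
  positivity

@[fun_prop]
theorem measurable_intervalOverlap (L : ℝ) : Measurable (intervalOverlap L) := by
  have hinner : StronglyMeasurable fun p : ℝ × ℝ =>
      ∫ y in Icc (0 : ℝ) L, exp (-p.1 * (p.2 - y) ^ 2) :=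
    (Continuous.stronglyMeasurable (f := fun q : (ℝ × ℝ) × ℝ => exp (-q.1.1 * (q.1.2 - q.2) ^ 2))
      (by fun_prop)).integral_prod_right'
  exact hinner.integral_prod_right'.measurable

theorem integrableOn_inv_norm_sub {E : Type*} [NormedAddCommGroup E] [NormedSpace ℝ E]
    [FiniteDimensional ℝ E] [MeasurableSpace E] [BorelSpace E] (μ : Measure E)
    [μ.IsAddHaarMeasure] (hE : 1 < Module.finrank ℝ E) (x : E) {K : Set E}
    (hK : Bornology.IsBounded K) : IntegrableOn (fun y => ‖x - y‖⁻¹) K μ := by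
  obtain ⟨r, hr⟩ := hK.subset_ball x
  have hball : IntegrableOn (fun z : E => ‖z‖⁻¹) (Metric.ball 0 r) μ :=
    integrableOn_ball_of_norm_le_rpow hE.le (C := 1) (α := 1) (by exact_mod_cast hE)
      (ae_of_all _ fun z => by simp [rpow_neg_one]) (by fun_prop)
  rw [← (μ.measurePreserving_sub_left x).integrableOn_comp_preimage
    (MeasurableEquiv.subLeft x).measurableEmbedding] at hball
  refine hball.mono_set fun y hy => ?_
  rw [mem_preimage, mem_ball_zero_iff, norm_sub_rev]
  exact mem_ball_iff_norm.1 (hr hy)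

theorem intervalOverlap_nonneg (L t : ℝ) : 0 ≤ intervalOverlap L t :=
  integral_nonneg fun _ => integral_nonneg fun _ => (exp_pos _).le

theorem cellD_eq_preimage_ofLp_pi (α : ℝ) :
    cellD α = WithLp.ofLp ⁻¹' univ.pi fun i => Icc 0 (![α, α⁻¹, 1] i) := by
  ext x
  simp [cellD, Fin.forall_fin_succ, -pi_univ_Icc]

theorem isCompact_cellD (α : ℝ) : IsCompact (cellD α) :=
  cellD_eq_preimage_ofLp_pi α ▸ isCompact_preimage_ofLp_pi fun _ => isCompact_Icc

instance (α : ℝ) : IsFiniteMeasure (volume.restrict (cellD α)) :=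
  isFiniteMeasure_restrict.2 (isCompact_cellD α).measure_lt_top.ne

theorem lintegral_lintegral_cellD_ofReal_exp_neg_mul_norm_sub_sq (α : ℝ) {t : ℝ} (ht : 0 ≤ t) :
    ∫⁻ x in cellD α, ∫⁻ y in cellD α, ENNReal.ofReal (exp (-t * ‖x - y‖ ^ 2)) =
      ENNReal.ofReal (intervalOverlap α t * intervalOverlap α⁻¹ t * intervalOverlap 1 t) := by
  rw [← ofReal_integral_integral_exp_neg_mul_norm_sub_sq ht, cellD_eq_preimage_ofLp_pi,
    integral_integral_exp_neg_mul_norm_sub_sq_pi, Fin.prod_univ_three]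
  rfl

theorem stmt_15_general (α : ℝ) :
    DeltaCell α
      = π ^ (-(1 : ℝ) / 2) *
          ∫ t in Set.Ioi (0 : ℝ),
            t ^ (-(1 : ℝ) / 2) * intervalOverlap α t * intervalOverlap α⁻¹ t
              * intervalOverlap 1 t := by
  calc DeltaCell α = (∫⁻ x in cellD α, ∫⁻ y in cellD α, ENNReal.ofReal ‖x - y‖⁻¹).toReal :=
        integral_integral_eq_toReal_lintegral_lintegral (by fun_prop) (fun _ _ => by positivity)
          fun x => integrableOn_inv_norm_sub volume (by simp) x (isCompact_cellD α).isBounded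
    _ = (ENNReal.ofReal (π ^ (-(1 : ℝ) / 2)) * ∫⁻ t in Ioi (0 : ℝ), ENNReal.ofReal
          (t ^ (-(1 : ℝ) / 2) * intervalOverlap α t * intervalOverlap α⁻¹ t
            * intervalOverlap 1 t)).toReal := by
        rw [lintegral_lintegral_ofReal_inv_norm_sub]
        congr 2
        refine setLIntegral_congr_fun measurableSet_Ioi fun t (ht : 0 < t) => ?_
        rw [lintegral_lintegral_cellD_ofReal_exp_neg_mul_norm_sub_sq α ht.le,
          ← ENNReal.ofReal_mul (by positivity), mul_assoc, mul_assoc, mul_assoc]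
    _ = _ := by
        rw [ENNReal.toReal_mul, ENNReal.toReal_ofReal (by positivity),
          ← integral_eq_lintegral_of_nonneg_ae _ (by fun_prop)]
        filter_upwards [ae_restrict_mem measurableSet_Ioi] with t (ht : 0 < t)
        exact mul_nonneg (mul_nonneg (mul_nonneg (rpow_nonneg ht.le _)
          (intervalOverlap_nonneg α t)) (intervalOverlap_nonneg α⁻¹ t)) (intervalOverlap_nonneg 1 t)

theorem stmt_15 (α : ℝ) (hα : 0 < α) :
    DeltaCell α
      = π ^ (-(1 : ℝ) / 2) *
          ∫ t in Set.Ioi (0 : ℝ),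
            t ^ (-(1 : ℝ) / 2) * intervalOverlap α t * intervalOverlap α⁻¹ t
              * intervalOverlap 1 t :=
  stmt_15_general α
end

section
/- For L > 0 and t > 0, define the Gaussian interval overlap I_L(t) = ∫_0^L ∫_0^L exp(−t(x − y)²) dx dy. Then for every fixed t > 0, the function u ↦ log I_{e^u}(t) is strictly concave on ℝ. -/
/-!
With `E(L) = ∫₀ᴸ e^{-tz²} dz`, the substitution `z = x - y` gives the closed form
`I_L(t) = 2 L E(L) + (e^{-tL²} - 1) / t`, so that `dI/dL = 2 E(L)`. The derivative of
`u ↦ log I_{eᵘ}(t)` is the elasticity `L I'(L) / I(L)` at `L = eᵘ`, and strict concavity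
amounts to the elasticity being strictly decreasing in `L`. With `s = tL²`, the sign of its
derivative is that of `E ((1 + 2s) e^{-s} - 1) - L e^{-s} (1 - e^{-s})`, which is negative
because `E < L` and `2 s e^{-s} + e^{-2s} ≤ 1`, i.e. `s ≤ sinh s`.
-/

open MeasureTheory Real

open Set intervalIntegral

theorem strictConcaveOn_log_comp_exp {F F' : ℝ → ℝ}
    (hF : ∀ L, 0 < L → HasDerivAt F (F' L) L) (hpos : ∀ L, 0 < L → 0 < F L)
    (hanti : StrictAntiOn (fun L => L * F' L / F L) (Ioi 0)) :
    StrictConcaveOn ℝ univ fun u => log (F (exp u)) := by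
  have hderiv : ∀ u, HasDerivAt (fun u => log (F (exp u)))
      (exp u * F' (exp u) / F (exp u)) u := fun u => by
    refine (((hF _ (exp_pos u)).comp u (hasDerivAt_exp u)).log
      (hpos _ (exp_pos u)).ne').congr_deriv ?_
    rw [Function.comp_apply]
    ring
  refine StrictAntiOn.strictConcaveOn_of_deriv convex_univ
    (fun u _ => (hderiv u).continuousAt.continuousWithinAt) ?_
  intro a _ b _ hab
  rw [(hderiv a).deriv, (hderiv b).deriv]
  exact hanti (exp_pos a) (exp_pos b) (exp_lt_exp.2 hab)

lemma two_mul_mul_exp_neg_add_exp_neg_sq_le_one {s : ℝ} (hs : 0 ≤ s) :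
    2 * s * exp (-s) + exp (-s) ^ 2 ≤ 1 := by
  have hsinh : 2 * s ≤ exp s - exp (-s) := by
    linarith [self_le_sinh_iff.2 hs, sinh_eq s]
  have hprod : exp s * exp (-s) = 1 := by rw [← exp_add, add_neg_cancel, exp_zero]
  nlinarith [mul_le_mul_of_nonneg_right hsinh (exp_pos (-s)).le]

lemma mul_one_add_two_mul_exp_neg_sub_one_lt {E L s : ℝ} (hE : 0 < E) (hEL : E < L)
    (hs : 0 < s) :
    E * ((1 + 2 * s) * exp (-s) - 1) < L * (exp (-s) * (1 - exp (-s))) := by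
  have hx : exp (-s) < 1 := exp_lt_one_iff.2 (neg_neg_of_pos hs)
  have hRHS : 0 < L * (exp (-s) * (1 - exp (-s))) :=
    mul_pos (hE.trans hEL) (mul_pos (exp_pos _) (sub_pos.2 hx))
  rcases le_or_gt ((1 + 2 * s) * exp (-s)) 1 with hle | hgt
  · nlinarith
  · have hbound := two_mul_mul_exp_neg_add_exp_neg_sq_le_one hs.le
    calc E * ((1 + 2 * s) * exp (-s) - 1) < L * ((1 + 2 * s) * exp (-s) - 1) :=
          mul_lt_mul_of_pos_right hEL (sub_pos.2 hgt)
      _ ≤ L * (exp (-s) * (1 - exp (-s))) :=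
          mul_le_mul_of_nonneg_left (by nlinarith) (hE.trans hEL).le

noncomputable def gaussPrimitive (t L : ℝ) : ℝ := ∫ z in (0 : ℝ)..L, exp (-t * z ^ 2)

noncomputable def overlapClosedForm (t L : ℝ) : ℝ :=
  2 * L * gaussPrimitive t L + (exp (-t * L ^ 2) - 1) / t

section Gaussian

variable {t L : ℝ}

lemma continuous_gaussian (t : ℝ) : Continuous fun z : ℝ => exp (-t * z ^ 2) := by
  fun_prop

lemma hasDerivAt_gaussPrimitive (t L : ℝ) :
    HasDerivAt (gaussPrimitive t) (exp (-t * L ^ 2)) L :=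
  ((continuous_gaussian t).integral_hasStrictDerivAt 0 L).hasDerivAt

lemma continuous_gaussPrimitive (t : ℝ) : Continuous (gaussPrimitive t) :=
  continuous_iff_continuousAt.2 fun L => (hasDerivAt_gaussPrimitive t L).continuousAt

lemma gaussPrimitive_pos (hL : 0 < L) : 0 < gaussPrimitive t L :=
  intervalIntegral_pos_of_pos ((continuous_gaussian t).intervalIntegrable 0 L)
    (fun _ => exp_pos _) hL

lemma gaussPrimitive_lt (ht : 0 < t) (hL : 0 < L) : gaussPrimitive t L < L := by
  have hlt : gaussPrimitive t L < ∫ _ in (0 : ℝ)..L, (1 : ℝ) := by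
    refine integral_lt_integral_of_continuousOn_of_le_of_exists_lt hL
      (continuous_gaussian t).continuousOn continuousOn_const
      (fun x _ => exp_le_one_iff.2 ?_) ⟨L, ⟨hL.le, le_rfl⟩, exp_lt_one_iff.2 ?_⟩
    · nlinarith [sq_nonneg x]
    · nlinarith [pow_pos hL 2]
  simpa using hlt

lemma gaussPrimitive_neg (t L : ℝ) : gaussPrimitive t (-L) = -gaussPrimitive t L := by
  have h := integral_comp_neg (a := 0) (b := -L) fun z : ℝ => exp (-t * z ^ 2)
  simp only [neg_sq, neg_neg, neg_zero] at h
  rw [gaussPrimitive, h, integral_symm, gaussPrimitive]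

lemma hasDerivAt_overlapClosedForm (ht : t ≠ 0) (L : ℝ) :
    HasDerivAt (overlapClosedForm t) (2 * gaussPrimitive t L) L := by
  have hsq : HasDerivAt (fun L : ℝ => -t * L ^ 2) (-t * (2 * L)) L := by
    simpa using (hasDerivAt_pow 2 L).const_mul (-t)
  refine ((((hasDerivAt_id' L).const_mul 2).mul (hasDerivAt_gaussPrimitive t L)).add
    ((hsq.exp.sub_const 1).div_const t)).congr_deriv ?_
  field_simp
  ring

lemma overlapClosedForm_eq_integral (ht : t ≠ 0) (L : ℝ) :
    overlapClosedForm t L = ∫ z in (0 : ℝ)..L, 2 * gaussPrimitive t z := by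
  rw [integral_eq_sub_of_hasDerivAt (fun x _ => hasDerivAt_overlapClosedForm ht x)
    ((continuous_const.mul (continuous_gaussPrimitive t)).intervalIntegrable 0 L)]
  simp [overlapClosedForm]

lemma overlapClosedForm_pos (ht : t ≠ 0) (hL : 0 < L) : 0 < overlapClosedForm t L := by
  rw [overlapClosedForm_eq_integral ht]
  exact intervalIntegral_pos_of_pos_on
    ((continuous_const.mul (continuous_gaussPrimitive t)).intervalIntegrable 0 L)
    (fun x hx => mul_pos two_pos (gaussPrimitive_pos hx.1)) hL

lemma integral_gaussian_sub (t L x : ℝ) :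
    ∫ y in (0 : ℝ)..L, exp (-t * (x - y) ^ 2)
      = gaussPrimitive t x + gaussPrimitive t (L - x) := by
  have hsplit := integral_interval_sub_left (μ := volume)
    ((continuous_gaussian t).intervalIntegrable 0 x)
    ((continuous_gaussian t).intervalIntegrable 0 (x - L))
  have hodd := gaussPrimitive_neg t (L - x)
  rw [neg_sub] at hodd
  rw [integral_comp_sub_left (fun z => exp (-t * z ^ 2)), sub_zero, ← hsplit]
  change gaussPrimitive t x - gaussPrimitive t (x - L) = _
  rw [hodd, sub_neg_eq_add]

lemma intervalOverlap_eq (ht : t ≠ 0) (hL : 0 ≤ L) :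
    intervalOverlap L t = overlapClosedForm t L := by
  have hIcc (g : ℝ → ℝ) : ∫ x in Icc (0 : ℝ) L, g x = ∫ x in (0 : ℝ)..L, g x := by
    rw [integral_Icc_eq_integral_Ioc, integral_of_le hL]
  have hreflect : ∫ x in (0 : ℝ)..L, gaussPrimitive t (L - x)
      = ∫ x in (0 : ℝ)..L, gaussPrimitive t x := by
    simp [integral_comp_sub_left (gaussPrimitive t) L]
  have hintegrable : IntervalIntegrable (fun x => gaussPrimitive t (L - x)) volume 0 L :=
    ((continuous_gaussPrimitive t).comp (continuous_sub_left L)).intervalIntegrable 0 L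
  simp only [intervalOverlap, hIcc, integral_gaussian_sub]
  rw [integral_add ((continuous_gaussPrimitive t).intervalIntegrable 0 L) hintegrable, hreflect,
    overlapClosedForm_eq_integral ht, intervalIntegral.integral_const_mul]
  ring

end Gaussian

lemma overlapClosedForm_mul_lt {t L : ℝ} (ht : 0 < t) (hL : 0 < L) :
    (2 * gaussPrimitive t L + L * (2 * exp (-t * L ^ 2))) * overlapClosedForm t L
      < L * (2 * gaussPrimitive t L) * (2 * gaussPrimitive t L) := by
  have hkey := mul_one_add_two_mul_exp_neg_sub_one_lt (gaussPrimitive_pos (t := t) hL)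
    (gaussPrimitive_lt ht hL) (mul_pos ht (pow_pos hL 2))
  rw [← neg_mul] at hkey
  have hexpand : (2 * gaussPrimitive t L + L * (2 * exp (-t * L ^ 2))) * overlapClosedForm t L
        - L * (2 * gaussPrimitive t L) * (2 * gaussPrimitive t L)
      = 2 / t * (gaussPrimitive t L * ((1 + 2 * (t * L ^ 2)) * exp (-t * L ^ 2) - 1)
        - L * (exp (-t * L ^ 2) * (1 - exp (-t * L ^ 2)))) := by
    rw [overlapClosedForm]
    field_simp
    ring
  rw [← sub_neg, hexpand]
  exact mul_neg_of_pos_of_neg (by positivity) (sub_neg.2 hkey)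

lemma strictAntiOn_elasticity_overlapClosedForm {t : ℝ} (ht : 0 < t) :
    StrictAntiOn (fun L => L * (2 * gaussPrimitive t L) / overlapClosedForm t L) (Ioi 0) := by
  have hderiv : ∀ L, 0 < L →
      HasDerivAt (fun L => L * (2 * gaussPrimitive t L) / overlapClosedForm t L)
        (((2 * gaussPrimitive t L + L * (2 * exp (-t * L ^ 2))) * overlapClosedForm t L
          - L * (2 * gaussPrimitive t L) * (2 * gaussPrimitive t L))
            / overlapClosedForm t L ^ 2) L := fun L hL => by
    refine (((hasDerivAt_id' L).mul ((hasDerivAt_gaussPrimitive t L).const_mul 2)).div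
      (hasDerivAt_overlapClosedForm ht.ne' L)
      (overlapClosedForm_pos ht.ne' hL).ne').congr_deriv ?_
    simp only [Pi.mul_apply]
    ring
  refine strictAntiOn_of_deriv_neg (convex_Ioi 0)
    (fun L hL => (hderiv L hL).continuousAt.continuousWithinAt) fun L hL => ?_
  rw [interior_Ioi] at hL
  rw [(hderiv L hL).deriv]
  exact div_neg_of_neg_of_pos (sub_neg.2 (overlapClosedForm_mul_lt ht hL))
    (pow_pos (overlapClosedForm_pos ht.ne' hL) 2)

theorem stmt_16 (t : ℝ) (ht : 0 < t) :
    StrictConcaveOn ℝ Set.univ (fun u : ℝ => Real.log (intervalOverlap (Real.exp u) t)) := by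
  simp only [intervalOverlap_eq ht.ne' (exp_pos _).le]
  exact strictConcaveOn_log_comp_exp (fun L _ => hasDerivAt_overlapClosedForm ht.ne' L)
    (fun _ => overlapClosedForm_pos ht.ne') (strictAntiOn_elasticity_overlapClosedForm ht)
end

section
/- For r > 0, let A(r) = ∫_0^r exp(−s²) ds, E(r) = exp(−r²), and B(r) = (1 − E(r))/2. Then for every r > 0, B(r) · (A(r) + r·E(r)) − r² · A(r) · E(r) > 0. -/
open MeasureTheory Real

theorem stmt_18 (r : ℝ) (hr : 0 < r) :
    ((1 - Real.exp (-r ^ 2)) / 2) *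
        ((∫ s in (0 : ℝ)..r, Real.exp (-s ^ 2)) + r * Real.exp (-r ^ 2))
      - r ^ 2 * (∫ s in (0 : ℝ)..r, Real.exp (-s ^ 2)) * Real.exp (-r ^ 2) > 0 := by
  set E := Real.exp (-r ^ 2) with hEdef
  set A := ∫ s in (0 : ℝ)..r, Real.exp (-s ^ 2) with hAdef
  have hEpos : 0 < E := Real.exp_pos _
  have hElt1 : E < 1 := by
    rw [hEdef]
    exact Real.exp_lt_one_iff.mpr (by nlinarith)
  have hint : IntervalIntegrable (fun s : ℝ => Real.exp (-s ^ 2)) volume 0 r :=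
    (Continuous.intervalIntegrable (by continuity) 0 r)
  have hApos : 0 < A := by
    rw [hAdef]
    exact intervalIntegral.intervalIntegral_pos_of_pos hint (fun x => Real.exp_pos _) hr
  have hAle : A ≤ r := by
    have h1 : (∫ s in (0 : ℝ)..r, Real.exp (-s ^ 2)) ≤ ∫ s in (0 : ℝ)..r, (1 : ℝ) := by
      apply intervalIntegral.integral_mono_on hr.le hint
        (intervalIntegrable_const)
      intro x hx
      exact Real.exp_le_one_iff.mpr (by nlinarith)
    simpa using h1
  -- key scalar inequality: 2 * r^2 * E < 1 - E^2 (sinh (r^2) > r^2)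
  have hsinh : r ^ 2 < Real.sinh (r ^ 2) := Real.self_lt_sinh_iff.mpr (by positivity)
  have hkey : 2 * r ^ 2 * E < 1 - E ^ 2 := by
    have h1 : Real.sinh (r ^ 2) = (Real.exp (r ^ 2) - E) / 2 := by
      rw [Real.sinh_eq, hEdef]
    have h2 : Real.exp (r ^ 2) * E = 1 := by
      rw [hEdef, ← Real.exp_add]; norm_num
    nlinarith [hsinh, hEpos, Real.exp_pos (r ^ 2)]
  nlinarith [mul_le_mul_of_nonneg_left hAle (mul_nonneg (by nlinarith : (0:ℝ) ≤ (1 - E)/2) hEpos.le), hApos, hkey, hEpos]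
end

section
/- The six-dimensional integral ∫_{[0,1]³} ∫_{[0,1]³} ‖x − y‖^{-1} dx dy over the unit cube equals the three-dimensional integral ∫_{[−1,1]³} (1 − |r₁|)(1 − |r₂|)(1 − |r₃|) / ‖r‖ dr, where r = (r₁, r₂, r₃). -/
open MeasureTheory Real

/-- The unit cube `[0,1]³` in Euclidean `ℝ³`. -/
def unitCube : Set (EuclideanSpace ℝ (Fin 3)) := {x | ∀ i, x i ∈ Set.Icc (0 : ℝ) 1}

/-- The box `[-1,1]³` in Euclidean `ℝ³`. -/
def symBox : Set (EuclideanSpace ℝ (Fin 3)) := {r | ∀ i, r i ∈ Set.Icc (-1 : ℝ) 1}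

/-!
Substituting `y = x - r` in the inner integral and exchanging the order of integration (Tonelli)
turns the left side into `∫ vol(Q ∩ (Q + r)) / ‖r‖ dr`, where `Q` is the unit cube. The overlap
`Q ∩ (Q + r)` is a box with sides `1 - |rᵢ|`, empty unless `r ∈ [-1,1]³`. All of this is an
identity of `ℝ≥0∞`-valued integrals; it transfers to Bochner integrals because `‖r‖⁻¹` is locally
integrable in dimension `3 > 1`.
-/

open Set
open scoped ENNReal

section Correlation

variable {G : Type*} [MeasurableSpace G] [AddCommGroup G] [MeasurableAdd₂ G] [MeasurableNeg G]
  {μ : Measure G} [SFinite μ] [μ.IsAddLeftInvariant] [μ.IsNegInvariant]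

theorem setLIntegral_setLIntegral_sub {s : Set G} (hs : MeasurableSet s) {f : G → ℝ≥0∞}
    (hf : Measurable f) :
    ∫⁻ x in s, ∫⁻ y in s, f (x - y) ∂μ ∂μ
      = ∫⁻ r, μ (s ∩ (· - r) ⁻¹' s) * f r ∂μ := by
  have hinner (x : G) : ∫⁻ y in s, f (x - y) ∂μ
      = ∫⁻ r, ((· - r) ⁻¹' s).indicator 1 x * f r ∂μ := by
    rw [← lintegral_indicator hs,
      ← (Measure.measurePreserving_sub_left μ x).lintegral_comp
        (f := s.indicator fun y => f (x - y))
        ((hf.comp (measurable_const_sub x)).indicator hs)]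
    congr with r
    by_cases hr : x - r ∈ s <;> simp [indicator, hr]
  have hmeas :
      Measurable (Function.uncurry fun x r : G => ((· - r) ⁻¹' s).indicator 1 x * f r) :=
    ((measurable_const.indicator hs).comp (measurable_fst.sub measurable_snd)).mul
      (hf.comp measurable_snd)
  simp_rw [hinner]
  rw [lintegral_lintegral_swap hmeas.aemeasurable]
  congr with r
  rw [lintegral_mul_const _ (measurable_one.indicator (measurable_sub_const r hs)),
    lintegral_indicator_one (measurable_sub_const r hs),
    Measure.restrict_apply (measurable_sub_const r hs), inter_comm]

end Correlation

theorem integral_integral_eq_toReal_lintegral {α β : Type*} [MeasurableSpace α]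
    [MeasurableSpace β] {μ : Measure α} {ν : Measure β} [SFinite ν] {f : α → β → ℝ}
    (hf : Measurable (Function.uncurry f)) (hf0 : ∀ x y, 0 ≤ f x y)
    (hfin : ∫⁻ x, ∫⁻ y, ENNReal.ofReal (f x y) ∂ν ∂μ ≠ ∞) :
    ∫ x, ∫ y, f x y ∂ν ∂μ = (∫⁻ x, ∫⁻ y, ENNReal.ofReal (f x y) ∂ν ∂μ).toReal := by
  have hL : Measurable fun x => ∫⁻ y, ENNReal.ofReal (f x y) ∂ν :=
    hf.ennreal_ofReal.lintegral_prod_right'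
  rw [← integral_toReal hL.aemeasurable (ae_lt_top hL hfin)]
  congr with x
  exact integral_eq_lintegral_of_nonneg_ae (ae_of_all _ (hf0 x))
    (hf.comp measurable_prodMk_left).aestronglyMeasurable

theorem locallyIntegrable_norm_inv {E : Type*} [NormedAddCommGroup E] [NormedSpace ℝ E]
    [FiniteDimensional ℝ E] [MeasurableSpace E] [BorelSpace E] {μ : Measure E}
    [μ.IsAddHaarMeasure] (hE : 1 < Module.finrank ℝ E) :
    LocallyIntegrable (fun x : E => ‖x‖⁻¹) μ :=
  locallyIntegrable_of_norm_le_rpow (C := 1) (α := 1) hE.le (by exact_mod_cast hE)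
    (ae_of_all _ fun x => by simp [Real.rpow_neg_one])
    measurable_norm.inv.aestronglyMeasurable

section Box

variable {ι : Type*}

theorem euclideanSpace_box_eq_preimage_ofLp (a b : ι → ℝ) :
    {x : EuclideanSpace ℝ ι | ∀ i, x i ∈ Icc (a i) (b i)} = WithLp.ofLp ⁻¹' Icc a b := by
  ext x
  simp [← Set.pi_univ_Icc]

theorem isCompact_euclideanSpace_box (a b : ι → ℝ) :
    IsCompact {x : EuclideanSpace ℝ ι | ∀ i, x i ∈ Icc (a i) (b i)} := by
  rw [euclideanSpace_box_eq_preimage_ofLp]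
  exact (PiLp.continuousLinearEquiv 2 ℝ fun _ : ι => ℝ).toHomeomorph.isCompact_preimage.2
    isCompact_Icc

variable [Fintype ι]

theorem measurableSet_euclideanSpace_box (a b : ι → ℝ) :
    MeasurableSet {x : EuclideanSpace ℝ ι | ∀ i, x i ∈ Icc (a i) (b i)} := by
  rw [euclideanSpace_box_eq_preimage_ofLp]
  exact measurableSet_Icc.preimage (PiLp.volume_preserving_ofLp ι).measurable

theorem volume_euclideanSpace_box (a b : ι → ℝ) :
    volume {x : EuclideanSpace ℝ ι | ∀ i, x i ∈ Icc (a i) (b i)}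
      = ∏ i, ENNReal.ofReal (b i - a i) := by
  rw [euclideanSpace_box_eq_preimage_ofLp,
    (PiLp.volume_preserving_ofLp ι).measure_preimage measurableSet_Icc.nullMeasurableSet,
    Real.volume_Icc_pi]

theorem volume_unitBox_inter_preimage_sub (r : EuclideanSpace ℝ ι) :
    volume ({x : EuclideanSpace ℝ ι | ∀ i, x i ∈ Icc 0 1}
        ∩ (· - r) ⁻¹' {x | ∀ i, x i ∈ Icc 0 1})
      = ∏ i, ENNReal.ofReal (1 - |r i|) := by
  have hbox : {x : EuclideanSpace ℝ ι | ∀ i, x i ∈ Icc 0 1}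
        ∩ (· - r) ⁻¹' {x | ∀ i, x i ∈ Icc 0 1}
      = {x | ∀ i, x i ∈ Icc (max 0 (r i)) (min 1 (1 + r i))} := by
    ext x
    simp [← forall_and, ← Icc_inter_Icc]
  rw [hbox, volume_euclideanSpace_box]
  congr with i
  rcases le_total 0 (r i) with h | h
  · simp [h, abs_of_nonneg]
  · simp [h, abs_of_nonpos]

end Box

theorem one_sub_abs_mem_Icc {t : ℝ} (ht : t ∈ Icc (-1) 1) : 1 - |t| ∈ Icc 0 1 := by
  have := abs_le.2 ht
  constructor <;> linarith [abs_nonneg t]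

theorem prod_one_sub_abs_nonneg_of_mem_symBox {r : EuclideanSpace ℝ (Fin 3)} (hr : r ∈ symBox) :
    0 ≤ (1 - |r 0|) * (1 - |r 1|) * (1 - |r 2|) := by
  have := (one_sub_abs_mem_Icc (hr 0)).1
  have := (one_sub_abs_mem_Icc (hr 1)).1
  have := (one_sub_abs_mem_Icc (hr 2)).1
  positivity

theorem integrableOn_prod_one_sub_abs_div_norm :
    IntegrableOn
      (fun r : EuclideanSpace ℝ (Fin 3) => (1 - |r 0|) * (1 - |r 1|) * (1 - |r 2|) / ‖r‖)
      symBox := by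
  refine ((locallyIntegrable_norm_inv (by simp)).integrableOn_isCompact
    (isCompact_euclideanSpace_box _ _)).mono'
    (Measurable.aestronglyMeasurable (by fun_prop))
    (ae_restrict_of_forall_mem (measurableSet_euclideanSpace_box _ _) fun r hr => ?_)
  obtain ⟨-, h01⟩ := one_sub_abs_mem_Icc (hr 0)
  obtain ⟨h10, h11⟩ := one_sub_abs_mem_Icc (hr 1)
  obtain ⟨h20, h21⟩ := one_sub_abs_mem_Icc (hr 2)
  rw [norm_div, norm_norm, div_eq_mul_inv,
    Real.norm_of_nonneg (prod_one_sub_abs_nonneg_of_mem_symBox hr)]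
  exact mul_le_of_le_one_left (by positivity) (mul_le_one₀ (mul_le_one₀ h01 h10 h11) h20 h21)

theorem setLIntegral_symBox_eq_lintegral_prod_mul :
    ∫⁻ r : EuclideanSpace ℝ (Fin 3) in symBox,
        ENNReal.ofReal ((1 - |r 0|) * (1 - |r 1|) * (1 - |r 2|) / ‖r‖)
      = ∫⁻ r : EuclideanSpace ℝ (Fin 3),
          (∏ i, ENNReal.ofReal (1 - |r i|)) * ENNReal.ofReal ‖r‖⁻¹ := by
  have hsupp : Function.support (fun r : EuclideanSpace ℝ (Fin 3) =>
      (∏ i, ENNReal.ofReal (1 - |r i|)) * ENNReal.ofReal ‖r‖⁻¹) ⊆ symBox := by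
    intro r hr i
    by_contra hi
    refine hr (mul_eq_zero_of_left (Finset.prod_eq_zero (Finset.mem_univ i) ?_) _)
    rw [ENNReal.ofReal_eq_zero, sub_nonpos]
    exact (not_le.1 (mt abs_le.1 hi)).le
  rw [← setLIntegral_eq_of_support_subset hsupp]
  refine setLIntegral_congr_fun (measurableSet_euclideanSpace_box _ _) fun r hr => ?_
  rw [div_eq_mul_inv, ENNReal.ofReal_mul (prod_one_sub_abs_nonneg_of_mem_symBox hr),
    ← ENNReal.ofReal_prod_of_nonneg fun i _ => (one_sub_abs_mem_Icc (hr i)).1,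
    Fin.prod_univ_three]

theorem stmt_19 :
    ∫ x in unitCube, ∫ y in unitCube, ‖x - y‖⁻¹
      = ∫ r in symBox, (1 - |r 0|) * (1 - |r 1|) * (1 - |r 2|) / ‖r‖ := by
  have hcorr : ∫⁻ x in unitCube, ∫⁻ y in unitCube, ENNReal.ofReal ‖x - y‖⁻¹
      = ∫⁻ r : EuclideanSpace ℝ (Fin 3) in symBox,
          ENNReal.ofReal ((1 - |r 0|) * (1 - |r 1|) * (1 - |r 2|) / ‖r‖) := by
    calc _ = ∫⁻ r, volume (unitCube ∩ (· - r) ⁻¹' unitCube) * ENNReal.ofReal ‖r‖⁻¹ :=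
          setLIntegral_setLIntegral_sub (measurableSet_euclideanSpace_box _ _)
            (f := fun r => ENNReal.ofReal ‖r‖⁻¹) measurable_norm.inv.ennreal_ofReal
      _ = ∫⁻ r : EuclideanSpace ℝ (Fin 3),
            (∏ i, ENNReal.ofReal (1 - |r i|)) * ENNReal.ofReal ‖r‖⁻¹ := by
          simp_rw [unitCube, volume_unitBox_inter_preimage_sub]
      _ = _ := setLIntegral_symBox_eq_lintegral_prod_mul.symm
  rw [integral_integral_eq_toReal_lintegral (by fun_prop) (fun _ _ => by positivity)
      (hcorr ▸ integrableOn_prod_one_sub_abs_div_norm.lintegral_lt_top.ne), hcorr,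
    integral_eq_lintegral_of_nonneg_ae ?_ (Measurable.aestronglyMeasurable (by fun_prop))]
  exact ae_restrict_of_forall_mem (measurableSet_euclideanSpace_box _ _) fun r hr =>
    div_nonneg (prod_one_sub_abs_nonneg_of_mem_symBox hr) (norm_nonneg r)
end
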